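/- Let J = ⋂_{σ ∈ L} σHσ⁻¹ (the normal core of H in L). If the map C ↦ β_C from L/H to K is injective, then the intermediate field generated over k by all the β_C, C ∈ L/H, equals the subfield of K fixed by all automorphisms Φ(g) with g ∈ G ∩ J; in particular, if G ∩ J is the trivial group, then the field generated over k by the roots of the resolvent R equals K, the splitting field of f. -/

import Mathlib

/-! Since `f` is separable and `K` is its splitting field, `K/k` is Galois, and every
`k`-automorphism of `K` permutes the `α i`, hence equals `Φ σ` for some `σ` in the Galois group
`G` of `α`. For `g ∈ G`, `Φ g` sends `β (σH)` to `β (gσH)`; as `β` is injective, `Φ g` fixes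
every `β C` iff `g` fixes every coset of `H` in `L`, i.e. iff `g` lies in the normal core `J`.
The Galois correspondence then identifies `k(β)` with the fixed field of `Φ (G ∩ J)`. -/

open MvPolynomial Polynomial

variable (k : Type*) {K : Type*} [Field k] [Field K] [Algebra k K] {n : ℕ}

/-- The ideal of `α`-relations. -/
noncomputable def relIdeal (α : Fin n → K) : Ideal (MvPolynomial (Fin n) k) :=
  RingHom.ker (MvPolynomial.aeval α : MvPolynomial (Fin n) k →ₐ[k] K)

/-- The Galois group of `α` over `k`: permutations stabilizing the ideal of relations. -/
def galoisGroup (α : Fin n → K) : Subgroup (Equiv.Perm (Fin n)) where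
  carrier := {σ | MvPolynomial.rename ⇑σ '' (relIdeal k α : Set (MvPolynomial (Fin n) k))
      = (relIdeal k α : Set (MvPolynomial (Fin n) k))}
  one_mem' := by
    have h : ∀ p : MvPolynomial (Fin n) k, rename ⇑(1 : Equiv.Perm (Fin n)) p = p := by
      intro p; simp [Equiv.Perm.coe_one, rename_id]
    simp only [Set.mem_setOf_eq]
    rw [Set.image_congr' h]
    exact Set.image_id _
  mul_mem' := by
    intro σ τ hσ hτ
    simp only [Set.mem_setOf_eq] at *
    have h : ∀ p : MvPolynomial (Fin n) k,
        rename ⇑(σ * τ) p = rename ⇑σ (rename ⇑τ p) := by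
      intro p; rw [rename_rename]; rfl
    rw [Set.image_congr' h]
    calc (fun p => rename ⇑σ (rename ⇑τ p)) '' (relIdeal k α : Set (MvPolynomial (Fin n) k))
        = rename ⇑σ '' (rename ⇑τ '' (relIdeal k α : Set (MvPolynomial (Fin n) k))) :=
          (Set.image_comp _ _ _)
      _ = _ := by rw [hτ, hσ]
  inv_mem' := by
    intro σ hσ
    simp only [Set.mem_setOf_eq] at *
    conv_lhs => rw [← hσ]
    rw [← Set.image_comp]
    have h : ∀ p : MvPolynomial (Fin n) k,
        (rename ⇑σ⁻¹ ∘ rename ⇑σ) p = p := by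
      intro p
      simp only [Function.comp_apply, rename_rename]
      have : (⇑σ⁻¹ ∘ ⇑σ) = id := by
        funext i; simp
      rw [this, rename_id]; rfl
    rw [Set.image_congr' h]
    exact Set.image_id _

/-- The subfield of `K` fixed by the automorphisms `Φ σ` for `σ ∈ H`. -/
def fixedIF (Φ : Equiv.Perm (Fin n) → (K ≃ₐ[k] K)) (H : Subgroup (Equiv.Perm (Fin n))) :
    IntermediateField k K where
  carrier := {x : K | ∀ σ ∈ H, Φ σ x = x}
  mul_mem' := by
    intro a b ha hb σ hσ
    rw [map_mul, ha σ hσ, hb σ hσ]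
  one_mem' := by intro σ hσ; rw [map_one]
  add_mem' := by
    intro a b ha hb σ hσ
    rw [map_add, ha σ hσ, hb σ hσ]
  zero_mem' := by intro σ hσ; rw [map_zero]
  algebraMap_mem' := by intro r σ hσ; exact (Φ σ).commutes r
  inv_mem' := by
    intro x hx σ hσ
    rw [map_inv₀, hx σ hσ]

section Conjugation

variable {G : Type*} [Group G] {H L : Subgroup G}

theorem mem_iInf_map_conj_iff {g : G} :
    g ∈ ⨅ σ ∈ L, H.map (MulAut.conj σ).toMonoidHom ↔ ∀ σ ∈ L, σ⁻¹ * g * σ ∈ H := by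
  simp only [Subgroup.mem_iInf, Subgroup.mem_map, MulEquiv.coe_toMonoidHom, MulAut.conj_apply]
  refine forall₂_congr fun σ _ => ⟨?_, fun h => ⟨_, h, by group⟩⟩
  rintro ⟨h, hh, rfl⟩
  simpa [mul_assoc] using hh

theorem forall_smul_eq_iff_mem_iInf_map_conj (g : L) :
    (∀ C : L ⧸ H.subgroupOf L, g • C = C) ↔
      (g : G) ∈ ⨅ σ ∈ L, H.map (MulAut.conj σ).toMonoidHom := by
  rw [← inv_mem_iff, mem_iInf_map_conj_iff, QuotientGroup.mk_surjective.forall]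
  refine ⟨fun h σ hσ => ?_, fun h σ => ?_⟩
  · simpa [QuotientGroup.eq, Subgroup.mem_subgroupOf, mul_assoc] using h ⟨σ, hσ⟩
  · simpa [QuotientGroup.eq, Subgroup.mem_subgroupOf, mul_assoc] using h σ σ.2

end Conjugation

theorem AlgHom.apply_aeval_eq_aeval_rename {R A ι : Type*} [CommSemiring R] [CommSemiring A]
    [Algebra R A] (ψ : A →ₐ[R] A) {α : ι → A} {τ : ι → ι} (h : ∀ i, ψ (α i) = α (τ i))
    (Q : MvPolynomial ι R) : ψ (MvPolynomial.aeval α Q) = MvPolynomial.aeval α (rename τ Q) := by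
  rw [comp_aeval_apply, aeval_rename]
  exact congrArg (MvPolynomial.aeval · Q) (funext h)

theorem AlgEquiv.ext_of_adjoin_range_eq_top {R A ι : Type*} [CommSemiring R] [Semiring A]
    [Algebra R A] {α : ι → A} (hgen : Algebra.adjoin R (Set.range α) = ⊤) {ψ₁ ψ₂ : A ≃ₐ[R] A}
    (h : ∀ i, ψ₁ (α i) = ψ₂ (α i)) : ψ₁ = ψ₂ :=
  AlgEquiv.coe_toAlgHom_injective <| AlgHom.ext_of_adjoin_eq_top hgen <| Set.forall_mem_range.2 h

section

variable {k}

section SplittingField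

variable {ι : Type*} [Fintype ι] {α : ι → K}

theorem exists_map_eq_prod_X_sub_C
    (hcoeff : ∀ m : ℕ,
      (∏ i, (Polynomial.X - Polynomial.C (α i)) : K[X]).coeff m ∈ (algebraMap k K).range) :
    ∃ f : k[X], f.map (algebraMap k K) = ∏ i, (Polynomial.X - Polynomial.C (α i)) := by
  rw [← mem_lifts, lifts_iff_coeff_lifts]
  exact hcoeff

variable {f : k[X]} (hf : f.map (algebraMap k K) = ∏ i, (Polynomial.X - Polynomial.C (α i)))
include hf

theorem rootSet_eq_range : f.rootSet K = Set.range α := by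
  classical
  have hroots : (∏ i, (Polynomial.X - Polynomial.C (α i))).roots = Finset.univ.val.map α := by
    simpa [Multiset.map_map] using roots_multiset_prod_X_sub_C (Finset.univ.val.map α)
  ext
  simp [rootSet_def, aroots, hf, hroots]

theorem separable_of_map_eq_prod_X_sub_C (hinj : Function.Injective α) : f.Separable := by
  rw [← separable_map (algebraMap k K), hf]
  exact separable_prod_X_sub_C_iff.2 hinj

theorem isSplittingField_of_map_eq_prod_X_sub_C (hgen : Algebra.adjoin k (Set.range α) = ⊤) :
    f.IsSplittingField k K :=
  ⟨hf ▸ Splits.prod fun _ _ => Splits.X_sub_C _, (rootSet_eq_range hf).symm ▸ hgen⟩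

theorem exists_perm_apply_eq (hinj : Function.Injective α) (φ : K →ₐ[k] K) :
    ∃ σ : Equiv.Perm ι, ∀ i, φ (α i) = α (σ i) := by
  have hmaps : Set.MapsTo φ (Set.range α) (Set.range α) := rootSet_eq_range hf ▸ rootSet_mapsTo φ
  choose u hu using fun i => hmaps (Set.mem_range_self i)
  have hu_inj : Function.Injective u := fun i j hij =>
    hinj (φ.toRingHom.injective ((hu i).symm.trans ((congrArg α hij).trans (hu j))))
  exact ⟨Equiv.ofBijective u (Finite.injective_iff_bijective.1 hu_inj), fun i => (hu i).symm⟩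

end SplittingField

section GaloisGroup

variable {α : Fin n → K}

theorem rename_mem_relIdeal (ψ : K →ₐ[k] K) {τ : Fin n → Fin n} (h : ∀ i, ψ (α i) = α (τ i))
    {Q : MvPolynomial (Fin n) k} (hQ : Q ∈ relIdeal k α) : rename τ Q ∈ relIdeal k α := by
  rw [relIdeal, RingHom.mem_ker] at hQ ⊢
  rw [← ψ.apply_aeval_eq_aeval_rename h, hQ, map_zero]

theorem mem_galoisGroup_of_apply_eq (ψ : K ≃ₐ[k] K) {τ : Equiv.Perm (Fin n)}
    (h : ∀ i, ψ (α i) = α (τ i)) : τ ∈ galoisGroup k α := by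
  have h_symm : ∀ i, ψ.symm (α i) = α (τ⁻¹ i) := fun i => by
    rw [ψ.symm_apply_eq, h, ← Equiv.Perm.mul_apply, mul_inv_cancel, Equiv.Perm.one_apply]
  refine Set.Subset.antisymm (Set.image_subset_iff.2 fun Q => rename_mem_relIdeal ψ h)
    fun Q hQ => ⟨rename ⇑τ⁻¹ Q, rename_mem_relIdeal ψ.symm.toAlgHom (τ := ⇑τ⁻¹) h_symm hQ, ?_⟩
  rw [rename_rename, ← Equiv.Perm.coe_mul, mul_inv_cancel, Equiv.Perm.coe_one, rename_id_apply]

theorem exists_mem_galoisGroup_eq {f : k[X]}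
    (hf : f.map (algebraMap k K) = ∏ i, (Polynomial.X - Polynomial.C (α i)))
    (hinj : Function.Injective α) (hgen : Algebra.adjoin k (Set.range α) = ⊤)
    {Φ : Equiv.Perm (Fin n) → (K ≃ₐ[k] K)}
    (hΦ : ∀ τ ∈ galoisGroup k α, ∀ i, Φ τ (α i) = α (τ i)) (φ : K ≃ₐ[k] K) :
    ∃ σ ∈ galoisGroup k α, Φ σ = φ := by
  obtain ⟨σ, hσ⟩ := exists_perm_apply_eq hf hinj φ.toAlgHom
  have hσG := mem_galoisGroup_of_apply_eq φ hσ
  exact ⟨σ, hσG, AlgEquiv.ext_of_adjoin_range_eq_top hgen fun i =>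
    (hΦ σ hσG i).trans (hσ i).symm⟩

end GaloisGroup

theorem adjoin_range_eq_fixedIF [FiniteDimensional k K] [IsGalois k K] {ι : Type*} {β : ι → K}
    {Φ : Equiv.Perm (Fin n) → (K ≃ₐ[k] K)} {G J : Subgroup (Equiv.Perm (Fin n))}
    (hsurj : ∀ φ : K ≃ₐ[k] K, ∃ σ ∈ G, Φ σ = φ)
    (hfix : ∀ g ∈ G, (∀ i, Φ g (β i) = β i) ↔ g ∈ J) :
    IntermediateField.adjoin k (Set.range β) = fixedIF k Φ (G ⊓ J) := by
  refine le_antisymm ?_ fun x hx => ?_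
  · rw [IntermediateField.adjoin_le_iff]
    rintro _ ⟨i, rfl⟩ g ⟨hgG, hgJ⟩
    exact (hfix g hgG).2 hgJ i
  · rw [← IsGalois.fixedField_fixingSubgroup (IntermediateField.adjoin k (Set.range β))]
    rintro ⟨φ, hφ⟩
    obtain ⟨σ, hσG, rfl⟩ := hsurj φ
    have hσβ : ∀ i, Φ σ (β i) = β i := fun i =>
      (IntermediateField.mem_fixingSubgroup_iff _ _).1 hφ _
        (IntermediateField.subset_adjoin k _ ⟨i, rfl⟩)
    exact hx σ ⟨hσG, (hfix σ hσG).1 hσβ⟩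

theorem fixedIF_bot_eq_top {Φ : Equiv.Perm (Fin n) → (K ≃ₐ[k] K)} (h : Φ 1 = AlgEquiv.refl) :
    fixedIF k Φ ⊥ = ⊤ :=
  eq_top_iff.2 fun x _ σ hσ => by rw [Subgroup.mem_bot.1 hσ, h]; rfl

section Resolvent

variable {α : Fin n → K} {Φ : Equiv.Perm (Fin n) → (K ≃ₐ[k] K)}
  {H L : Subgroup (Equiv.Perm (Fin n))} {P : MvPolynomial (Fin n) k}
  {β : (↥L ⧸ H.subgroupOf L) → K}
  (hΦ : ∀ τ ∈ galoisGroup k α, ∀ i, Φ τ (α i) = α (τ i))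
  (hβ : ∀ σ : ↥L, β (QuotientGroup.mk σ) =
    MvPolynomial.aeval α (rename ⇑(σ : Equiv.Perm (Fin n)) P))
include hΦ hβ

theorem apply_resolventRoot_eq {g : L} (hg : (g : Equiv.Perm (Fin n)) ∈ galoisGroup k α)
    (C : ↥L ⧸ H.subgroupOf L) : Φ g (β C) = β (g • C) := by
  induction C using QuotientGroup.induction_on with
  | H σ =>
    rw [MulAction.Quotient.smul_mk, hβ, hβ]
    refine ((Φ g).toAlgHom.apply_aeval_eq_aeval_rename (hΦ g hg) _).trans ?_
    rw [rename_rename]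
    rfl

theorem forall_apply_resolventRoot_eq_iff (hβinj : Function.Injective β) {g : L}
    (hg : (g : Equiv.Perm (Fin n)) ∈ galoisGroup k α) :
    (∀ C, Φ g (β C) = β C) ↔
      (g : Equiv.Perm (Fin n)) ∈ ⨅ σ ∈ L, H.map (MulAut.conj σ).toMonoidHom := by
  rw [← forall_smul_eq_iff_mem_iInf_map_conj]
  simp_rw [apply_resolventRoot_eq hΦ hβ hg, hβinj.eq_iff]

end Resolvent

end

theorem adjoin_resolvent_roots_eq_fixedField
    (α : Fin n → K) (hinj : Function.Injective α)
    (hcoeff : ∀ m : ℕ, (∏ i : Fin n, (Polynomial.X - Polynomial.C (α i)) : K[X]).coeff m ∈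
      (algebraMap k K).range)
    (hgen : Algebra.adjoin k (Set.range α) = ⊤)
    (Φ : Equiv.Perm (Fin n) → (K ≃ₐ[k] K))
    (hΦ : ∀ τ ∈ galoisGroup k α, ∀ i : Fin n, Φ τ (α i) = α (τ i))
    (H L : Subgroup (Equiv.Perm (Fin n))) (hGL : galoisGroup k α ≤ L)
    (P : MvPolynomial (Fin n) k)
    (β : (↥L ⧸ H.subgroupOf L) → K)
    (hβ : ∀ σ : ↥L, β (QuotientGroup.mk σ) =
      MvPolynomial.aeval α (rename ⇑(σ : Equiv.Perm (Fin n)) P))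
    (J : Subgroup (Equiv.Perm (Fin n)))
    (hJ : J = ⨅ σ ∈ L, Subgroup.map (MulAut.conj σ).toMonoidHom H)
    (hβinj : Function.Injective β) :
    IntermediateField.adjoin k (Set.range β) = fixedIF k Φ (galoisGroup k α ⊓ J) ∧
    (galoisGroup k α ⊓ J = ⊥ → IntermediateField.adjoin k (Set.range β) = ⊤) := by
  obtain ⟨f, hf⟩ := exists_map_eq_prod_X_sub_C hcoeff
  have := isSplittingField_of_map_eq_prod_X_sub_C hf hgen
  have := Polynomial.IsSplittingField.finiteDimensional K f
  have : IsGalois k K := .of_separable_splitting_field (separable_of_map_eq_prod_X_sub_C hf hinj)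
  have hmain : IntermediateField.adjoin k (Set.range β) = fixedIF k Φ (galoisGroup k α ⊓ J) :=
    adjoin_range_eq_fixedIF (exists_mem_galoisGroup_eq hf hinj hgen hΦ) fun g hg =>
      hJ ▸ forall_apply_resolventRoot_eq_iff hΦ hβ hβinj (g := ⟨g, hGL hg⟩) hg
  refine ⟨hmain, fun hbot => ?_⟩
  rw [hmain, hbot, fixedIF_bot_eq_top]
  exact AlgEquiv.ext_of_adjoin_range_eq_top hgen fun i => hΦ 1 (one_mem _) i
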